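/- In a QoS satisfaction game with homogeneous users (T_n^c = T^c for all n), every social optimum is a pure Nash equilibrium. -/
import Mathlib


open Finset

/-- Congestion level of channel `c`: number of players choosing `c`. -/
def cong {N C : ℕ} (x : Fin N → Option (Fin C)) (c : Fin C) : ℕ :=
  (Finset.univ.filter fun n => x n = some c).card

/-- Utility with homogeneous users: common threshold `T c` on each channel `c`. -/
def utilH {N C : ℕ} (T : Fin C → ℕ) (x : Fin N → Option (Fin C)) (n : Fin N) : ℤ :=
  match x n with
  | none => 0
  | some c => if cong x c ≤ T c then 1 else -1

/-- Pure Nash equilibrium. -/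
def IsNashH {N C : ℕ} (T : Fin C → ℕ) (x : Fin N → Option (Fin C)) : Prop :=
  ∀ (n : Fin N) (s : Option (Fin C)), utilH T (Function.update x n s) n ≤ utilH T x n

/-- Number of satisfied players. -/
def BH {N C : ℕ} (T : Fin C → ℕ) (x : Fin N → Option (Fin C)) : ℕ :=
  (Finset.univ.filter fun n => utilH T x n = 1).card


lemma util_ge_neg_one {N C : ℕ} (T : Fin C → ℕ) (x : Fin N → Option (Fin C)) (n : Fin N) :
    -1 ≤ utilH T x n := by
  cases h : x n with
  | none => simp [utilH, h]
  | some c => simp only [utilH, h]; split <;> norm_num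

lemma cong_update_le {N C : ℕ} (x : Fin N → Option (Fin C)) (n : Fin N)
    (s : Option (Fin C)) (c : Fin C) (hs : s ≠ some c) :
    cong (Function.update x n s) c ≤ cong x c := by
  apply Finset.card_le_card
  intro m hm
  simp only [Finset.mem_filter, Finset.mem_univ, true_and] at *
  rcases eq_or_ne m n with rfl | h
  · rw [Function.update_self] at hm; exact absurd hm hs
  · rwa [Function.update_of_ne h] at hm

/-- With homogeneous users, every social optimum is a pure Nash equilibrium. -/
theorem homog_optimum_nash {N C : ℕ} (T : Fin C → ℕ) (x : Fin N → Option (Fin C))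
    (hopt : ∀ y : Fin N → Option (Fin C),
      ∑ n : Fin N, utilH T y n ≤ ∑ n : Fin N, utilH T x n) :
    IsNashH T x := by
  intro n s
  by_contra hcon
  push_neg at hcon
  set y := Function.update x n s with hy
  have hkey : ∀ m : Fin N, m ≠ n → utilH T x m ≤ utilH T y m := by
    intro m hm
    have hym : y m = x m := Function.update_of_ne hm _ _
    cases hxm : x m with
    | none => simp [utilH, hym, hxm]
    | some c =>
      simp only [utilH, hym, hxm]
      by_cases hc : cong x c ≤ T c
      · have hyc : cong y c ≤ T c := by
          by_cases hs : s = some c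
          · have hyn : y n = some c := by rw [hy, Function.update_self, hs]
            by_contra hnc
            have hval : utilH T y n = -1 := by
              simp [utilH, hyn, hnc]
            have := util_ge_neg_one T x n
            rw [hval] at hcon
            linarith
          · exact le_trans (cong_update_le x n s c hs) hc
        simp [hc, hyc]
      · rw [if_neg hc]; split <;> norm_num
  have hlt : ∑ m : Fin N, utilH T x m < ∑ m : Fin N, utilH T y m := by
    apply Finset.sum_lt_sum
    · intro m _
      rcases eq_or_ne m n with rfl | h
      · exact le_of_lt hcon
      · exact hkey m h
    · exact ⟨n, Finset.mem_univ n, hcon⟩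
  exact absurd (hopt y) (not_le.mpr hlt)
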